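/- arXiv:1902.09445 — 2 statements merged into one kernel-verified Lean document; each statement's English description precedes it below -/
import Mathlib

section
/- Let $c_0, c_1 : \mathbb{N} \to \mathbb{R}$ be nondecreasing functions and $\mu \in \mathbb{R}$. Define a sequence of functions $V_k : \mathbb{N} \to \mathbb{R}$ by choosing $V_0$ nondecreasing and setting $V_{k+1}(h) = \min\{c_1(h) + V_k(0),\; c_0(h) + V_k(h+1)\} - \mu$ for all $h \in \mathbb{N}$. Then for every $k \in \mathbb{N}$, the $k$-step differential value function $V_k$ is nondecreasing in $h$. -/
theorem Monotone.bellman_update {α : Type*} [AddCommGroup α] [LinearOrder α]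
    [IsOrderedAddMonoid α] {c0 c1 W : ℕ → α} (hc0 : Monotone c0) (hc1 : Monotone c1)
    (hW : Monotone W) (μ : α) :
    Monotone fun h => min (c1 h + W 0) (c0 h + W (h + 1)) - μ := fun _ _ hab =>
  sub_le_sub_right (min_le_min (add_le_add_left (hc1 hab) _) (add_le_add (hc0 hab)
    (hW (Nat.succ_le_succ hab)))) μ

/-- Every iterate of value iteration for the content-update MDP is
nondecreasing in the age: if `c0, c1 : ℕ → ℝ` are nondecreasing, `V 0` is a
nondecreasing initial function, and
`V (k+1) h = min (c1 h + V k 0) (c0 h + V k (h+1)) - μ`, then each `V k` is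
nondecreasing in `h`. -/
theorem stmt_1 (c0 c1 : ℕ → ℝ) (hc0 : Monotone c0) (hc1 : Monotone c1)
    (μ : ℝ) (V : ℕ → ℕ → ℝ) (hV0 : Monotone (V 0))
    (hrec : ∀ k h, V (k + 1) h = min (c1 h + V k 0) (c0 h + V k (h + 1)) - μ) :
    ∀ k, Monotone (V k) := by
  intro k
  induction k with
  | zero => exact hV0
  | succ k ih =>
    rw [show V (k + 1) = _ from funext (hrec k)]
    exact hc0.bellman_update hc1 ih μ
end

section
/- Let $c_0, c_1 : \mathbb{N} \to \mathbb{R}$ be nondecreasing functions and $\mu \in \mathbb{R}$. Define $V_k : \mathbb{N} \to \mathbb{R}$ by choosing $V_0$ nondecreasing and setting $V_{k+1}(h) = \min\{c_1(h) + V_k(0),\; c_0(h) + V_k(h+1)\} - \mu$. Suppose the sequence $(V_k)$ converges pointwise to a function $V : \mathbb{N} \to \mathbb{R}$, i.e., $\lim_{k\to\infty} V_k(h) = V(h)$ for every $h$. Then the limiting differential value function $V$ is nondecreasing in $h$. -/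
/-! The Bellman operator maps nondecreasing functions to nondecreasing functions, since both
branches of the minimum are nondecreasing in the age when the costs are. Hence every value
iterate is nondecreasing, and a pointwise limit of nondecreasing functions is nondecreasing. -/

section BellmanOperator

variable {α : Type*} [AddCommGroup α] [LinearOrder α] [IsOrderedAddMonoid α]

def bellmanOperator (c0 c1 : ℕ → α) (μ : α) (W : ℕ → α) : ℕ → α :=
  fun h => min (c1 h + W 0) (c0 h + W (h + 1)) - μ

theorem monotone_bellmanOperator {c0 c1 W : ℕ → α} (hc0 : Monotone c0) (hc1 : Monotone c1)
    (hW : Monotone W) (μ : α) : Monotone (bellmanOperator c0 c1 μ W) := fun _ _ hab =>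
  sub_le_sub_right
    (min_le_min (add_le_add_left (hc1 hab) _) (add_le_add (hc0 hab) (hW (Nat.succ_le_succ hab))))
    μ

end BellmanOperator

/-- The limiting differential value function of value iteration is
nondecreasing: if `c0, c1 : ℕ → ℝ` are nondecreasing, the iterates satisfy
`V (k+1) h = min (c1 h + V k 0) (c0 h + V k (h+1)) - μ` with `V 0`
nondecreasing, and `V k` converges pointwise to `Vlim`, then `Vlim` is
nondecreasing in the age `h`. -/
theorem stmt_2 (c0 c1 : ℕ → ℝ) (hc0 : Monotone c0) (hc1 : Monotone c1)
    (μ : ℝ) (V : ℕ → ℕ → ℝ) (hV0 : Monotone (V 0))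
    (hrec : ∀ k h, V (k + 1) h = min (c1 h + V k 0) (c0 h + V k (h + 1)) - μ)
    (Vlim : ℕ → ℝ)
    (hconv : ∀ h, Filter.Tendsto (fun k => V k h) Filter.atTop (nhds (Vlim h))) :
    Monotone Vlim := by
  have hiter : ∀ k, V (k + 1) = bellmanOperator c0 c1 μ (V k) := fun k => funext (hrec k)
  have hmono : ∀ k, Monotone (V k) := by
    intro k
    induction k with
    | zero => exact hV0
    | succ k ih => exact hiter k ▸ monotone_bellmanOperator hc0 hc1 ih μ
  exact monotone_of_frequently_monotone_of_tendsto (Filter.Frequently.of_forall hmono) hconv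
end
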